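/- arXiv:1112.0504 — 2 statements merged into one kernel-verified Lean document; each statement's English description precedes it below -/
import Mathlib

section
/- Let A be a K×N real matrix, Σ_b an N×N symmetric positive semidefinite matrix, σ > 0, and suppose B = I - A Σ_b Aᵀ is positive definite. Define Φ = σ B^{-1/2} A, where B^{-1/2} is the symmetric positive definite square root of B^{-1}. Then (Φ Σ_b Φᵀ + σ² I)^{-1/2} Φ = A, where the inverse square root is the symmetric positive definite one. -/
open Matrix
open scoped Matrix.Norms.L2Operator

/-- The square root of a positive semidefinite matrix, as defined in the older Mathlib
(`Matrix.PosSemidef.sqrt`, removed since). -/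
noncomputable def Matrix.PosSemidef.sqrt {n : Type*} [Fintype n] [DecidableEq n] {𝕜 : Type*}
    [RCLike 𝕜] [PartialOrder 𝕜] {A : Matrix n n 𝕜} (hA : A.PosSemidef) : Matrix n n 𝕜 :=
  hA.1.eigenvectorUnitary.1 * diagonal ((↑) ∘ (√·) ∘ hA.1.eigenvalues) *
    (star hA.1.eigenvectorUnitary : Matrix n n 𝕜)

/-!
Write `B = 1 - A Sb Aᵀ` and `R = B^{1/2}`, so that `B^{-1/2} = R⁻¹` and `Φ = σ R⁻¹ A`. Then
`Φ Sb Φᵀ = σ² R⁻¹ (1 - R²) R⁻¹ = σ² (B⁻¹ - 1)`, hence `Φ Sb Φᵀ + σ² = σ² B⁻¹`, whose inverse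
square root is `σ⁻¹ R`, and `σ⁻¹ R · σ R⁻¹ A = A`.
-/

namespace Matrix

variable {m n : Type*} [Fintype n] [DecidableEq n]

open scoped MatrixOrder

theorem PosSemidef.sqrt_eq_cfcSqrt {A : Matrix n n ℝ} (hA : A.PosSemidef) :
    hA.sqrt = CFC.sqrt A := by
  rw [CFC.sqrt_eq_cfc, cfc_nnreal_eq_real _ A, hA.1.cfc_eq]
  have h0 : ∀ i, max (hA.1.eigenvalues i) 0 = hA.1.eigenvalues i :=
    fun i => max_eq_left (hA.eigenvalues_nonneg i)
  simp [IsHermitian.cfc, PosSemidef.sqrt, Function.comp_def, h0, Unitary.conjStarAlgAut_apply]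

theorem smul_inv_mul_mul_transpose_add_smul_one {α : Type*} [CommRing α] [Fintype m]
    (A : Matrix n m α) (S : Matrix m m α) {R : Matrix n n α} (hR : IsUnit R.det) (hRT : R.IsSymm)
    (hRR : R * R = 1 - A * S * Aᵀ) (σ : α) :
    (σ • (R⁻¹ * A)) * S * (σ • (R⁻¹ * A))ᵀ + σ ^ 2 • 1 = σ ^ 2 • (1 - A * S * Aᵀ)⁻¹ := by
  have hASA : A * S * Aᵀ = 1 - R * R := by rw [hRR]; abel
  have hRinvT : (R⁻¹)ᵀ = R⁻¹ := by rw [transpose_nonsing_inv, hRT.eq]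
  calc (σ • (R⁻¹ * A)) * S * (σ • (R⁻¹ * A))ᵀ + σ ^ 2 • 1
      = σ ^ 2 • (R⁻¹ * (A * S * Aᵀ) * R⁻¹ + 1) := by
        simp only [transpose_smul, transpose_mul, hRinvT, Matrix.smul_mul, Matrix.mul_smul,
          smul_smul, smul_add, Matrix.mul_assoc]
        rw [sq]
    _ = σ ^ 2 • (1 - A * S * Aᵀ)⁻¹ := by
        rw [← hRR, Matrix.mul_inv_rev, hASA, Matrix.mul_sub, Matrix.sub_mul, Matrix.mul_one,
          Matrix.mul_assoc R⁻¹ (R * R), Matrix.mul_assoc R, mul_nonsing_inv R hR, Matrix.mul_one,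
          nonsing_inv_mul R hR, sub_add_cancel]

theorem PosDef.cfcSqrt_inv_smul_inv {B : Matrix n n ℝ} (hB : B.PosDef) {c : ℝ} (hc : 0 < c) :
    CFC.sqrt (c ^ 2 • B⁻¹)⁻¹ = c⁻¹ • CFC.sqrt B := by
  set R := CFC.sqrt B
  have hR : IsUnit (R * R).det := by
    rw [CFC.sqrt_mul_sqrt_self B hB.posSemidef.nonneg]
    exact hB.isUnit.map detMonoidHom
  have hinv : (c ^ 2 • B⁻¹)⁻¹ = (c⁻¹ • R) * (c⁻¹ • R) := by
    rw [← CFC.sqrt_mul_sqrt_self B hB.posSemidef.nonneg]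
    refine inv_eq_left_inv ?_
    rw [smul_mul_smul, smul_mul_smul, ← sq, inv_pow, inv_mul_cancel₀ (by positivity), one_smul,
      mul_nonsing_inv _ hR]
  rw [hinv, CFC.sqrt_mul_self _ (smul_nonneg (inv_nonneg.2 hc.le) (CFC.sqrt_nonneg B))]

end Matrix

open scoped MatrixOrder in
theorem stmt2_general {K N : ℕ}
    (A : Matrix (Fin K) (Fin N) ℝ) (Sb : Matrix (Fin N) (Fin N) ℝ)
    (σ : ℝ) (hσ : 0 < σ)
    (hB : ((1 : Matrix (Fin K) (Fin K) ℝ) - A * Sb * Aᵀ).PosDef)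
    (Φ : Matrix (Fin K) (Fin N) ℝ)
    (hΦ : Φ = σ • (hB.inv.posSemidef.sqrt * A))
    (hM : ((Φ * Sb * Φᵀ + σ ^ 2 • (1 : Matrix (Fin K) (Fin K) ℝ))⁻¹).PosSemidef) :
    hM.sqrt * Φ = A := by
  set R := CFC.sqrt (1 - A * Sb * Aᵀ)
  have hR : IsUnit R.det := (isUnit_iff_isUnit_det R).mp
    (CFC.isUnit_sqrt_iff_isStrictlyPositive.mpr hB.isStrictlyPositive)
  have hΦR : Φ = σ • (R⁻¹ * A) := by
    rw [hΦ, hB.inv.posSemidef.sqrt_eq_cfcSqrt, ← hB.posSemidef.inv_sqrt]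
  have hRT : R.IsSymm := isHermitian_iff_isSymm.mp (CFC.sqrt_nonneg _).posSemidef.isHermitian
  have hRR : R * R = 1 - A * Sb * Aᵀ := CFC.sqrt_mul_sqrt_self _ hB.posSemidef.nonneg
  rw [hM.sqrt_eq_cfcSqrt, hΦR, smul_inv_mul_mul_transpose_add_smul_one A Sb hR hRT hRR,
    hB.cfcSqrt_inv_smul_inv hσ]
  rw [Matrix.smul_mul, Matrix.mul_smul, smul_smul, inv_mul_cancel₀ hσ.ne', one_smul,
    ← Matrix.mul_assoc, mul_nonsing_inv R hR, Matrix.one_mul]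

/-- With `B = 1 - A Sb Aᵀ` positive definite, `σ > 0`, and
`Φ = σ B^{-1/2} A` (where `B^{-1/2}` is the symmetric positive definite square root of `B⁻¹`),
the whitening filter satisfies `(Φ Sb Φᵀ + σ² I)^{-1/2} Φ = A`, the inverse square root being
the symmetric positive (semi)definite one. -/
theorem stmt2 {K N : ℕ}
    (A : Matrix (Fin K) (Fin N) ℝ) (Sb : Matrix (Fin N) (Fin N) ℝ)
    (hSb : Sb.PosSemidef) (σ : ℝ) (hσ : 0 < σ)
    (hB : ((1 : Matrix (Fin K) (Fin K) ℝ) - A * Sb * Aᵀ).PosDef)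
    (Φ : Matrix (Fin K) (Fin N) ℝ)
    (hΦ : Φ = σ • (hB.inv.posSemidef.sqrt * A))
    (hM : ((Φ * Sb * Φᵀ + σ ^ 2 • (1 : Matrix (Fin K) (Fin K) ℝ))⁻¹).PosSemidef) :
    hM.sqrt * Φ = A :=
  stmt2_general A Sb σ hσ hB Φ hΦ hM
end

section
/- Suppose p_min, p_max ∈ (0,1) with p_min ≤ p_max < 1, α_min > 0, d_min > 0, and K > 0 satisfies K > 2·log((2/p_min)·(1-p_min)/(1-p_max)) / log(1 + α_min²d_min²/(4K)). Then the quantity Q = (1-p_min)/p_min · (1 + α_min²d_min²/(4K))^{-K/2} satisfies Q < (1 - p_max)/2, and consequently the bound B = (1/p_min)·[((1-p_max)/(1-p_min))·(1 + α_min²d_min²/(4K))^{K/2} - 1/p_min]^{-1} is positive and less than 1. -/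
/-- Under the measurement-number condition
`K > 2 log((2/p_min)(1-p_min)/(1-p_max)) / log(1 + α_min² d_min²/(4K))`, the quantity
`Q = ((1-p_min)/p_min)(1 + α_min² d_min²/(4K))^{-K/2}` satisfies `Q < (1-p_max)/2`, and the
achievable pFDR bound
`B = (1/p_min)·[((1-p_max)/(1-p_min))(1 + α_min² d_min²/(4K))^{K/2} - 1/p_min]⁻¹`
is positive and less than `1`. -/
theorem stmt15 (pmin pmax αmin dmin K : ℝ)
    (hpmin : 0 < pmin) (hle : pmin ≤ pmax) (hpmax : pmax < 1)
    (hα : 0 < αmin) (hd : 0 < dmin) (hK : 0 < K)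
    (hKbig : K > 2 * Real.log ((2 / pmin) * (1 - pmin) / (1 - pmax)) /
        Real.log (1 + αmin ^ 2 * dmin ^ 2 / (4 * K))) :
    (1 - pmin) / pmin * (1 + αmin ^ 2 * dmin ^ 2 / (4 * K)) ^ (-(K / 2)) < (1 - pmax) / 2 ∧
      0 < (1 / pmin) *
          (((1 - pmax) / (1 - pmin)) * (1 + αmin ^ 2 * dmin ^ 2 / (4 * K)) ^ (K / 2)
            - 1 / pmin)⁻¹ ∧
      (1 / pmin) *
          (((1 - pmax) / (1 - pmin)) * (1 + αmin ^ 2 * dmin ^ 2 / (4 * K)) ^ (K / 2)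
            - 1 / pmin)⁻¹ < 1 := by

  have hpmin1 : pmin < 1 := lt_of_le_of_lt hle hpmax
  have h1 : 0 < 1 - pmax := by linarith
  have h2 : 0 < 1 - pmin := by linarith
  set x : ℝ := 1 + αmin ^ 2 * dmin ^ 2 / (4 * K) with hxdef
  have hx1 : 1 < x := by
    have : 0 < αmin ^ 2 * dmin ^ 2 / (4 * K) := by positivity
    simp only [hxdef]; linarith
  have hx0 : (0:ℝ) < x := by linarith
  have hlogx : 0 < Real.log x := Real.log_pos hx1
  have hApos : 0 < (2 / pmin) * (1 - pmin) / (1 - pmax) := by positivity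
  have hlog : 2 * Real.log ((2 / pmin) * (1 - pmin) / (1 - pmax)) < K * Real.log x := by
    have := (div_lt_iff₀ hlogx).mp hKbig
    linarith
  set y : ℝ := x ^ (K / 2) with hydef
  have hy0 : 0 < y := Real.rpow_pos_of_pos hx0 _
  have hA_lt : (2 / pmin) * (1 - pmin) / (1 - pmax) < y := by
    rw [hydef, Real.rpow_def_of_pos hx0]
    calc (2 / pmin) * (1 - pmin) / (1 - pmax) = Real.exp (Real.log ((2 / pmin) * (1 - pmin) / (1 - pmax))) := (Real.exp_log hApos).symm
    _ < Real.exp (Real.log x * (K / 2)) := Real.exp_lt_exp.mpr (by nlinarith)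
  have hkey : 2 * (1 - pmin) < y * (pmin * (1 - pmax)) := by
    rw [div_mul_eq_mul_div, div_div, div_lt_iff₀ (by positivity)] at hA_lt
    nlinarith [hA_lt]
  have hkey' : 2 * (1 - pmin) / pmin < y * (1 - pmax) := by
    rw [div_lt_iff₀ hpmin]
    nlinarith [hkey]
  have hD : 1 / pmin < (1 - pmax) / (1 - pmin) * y - 1 / pmin := by
    rw [div_mul_eq_mul_div, lt_sub_iff_add_lt, lt_div_iff₀ h2]
    have hexp : (1 / pmin + 1 / pmin) * (1 - pmin) = 2 * (1 - pmin) / pmin := by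
      ring
    rw [hexp]
    nlinarith [hkey']
  have hDpos : 0 < (1 - pmax) / (1 - pmin) * y - 1 / pmin := lt_trans (by positivity) hD
  refine ⟨?_, ?_, ?_⟩
  · have hneg : x ^ (-(K / 2)) = y⁻¹ := by
      rw [hydef, ← Real.rpow_neg hx0.le]
    rw [hneg, div_mul_eq_mul_div, div_lt_div_iff₀ hpmin two_pos]
    nlinarith [mul_lt_mul_of_pos_right hkey (inv_pos.mpr hy0), mul_inv_cancel₀ hy0.ne']
  · exact mul_pos (by positivity) (inv_pos.mpr hDpos)
  · rw [← div_eq_mul_inv, div_lt_one hDpos]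
    exact hD
end
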